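/- For ν, μ ∈ P⁺ with μ = 2μ₀ + μ₁ and ν(h_j) ≥ 2 for some j ∈ [1,n], the polynomials p_ν^μ satisfy the recursion p_ν^μ = q^{(ω_j, ν−μ)} p_{ν−2ω_j}^{μ−2ω_j} + q^{(ν, α_j)−1} p_{ν−α_j}^μ, where p is extended by zero to arguments outside P⁺. -/

import Mathlib

open Finset

abbrev Wt (n : ℕ) := Fin n → ℤ

def omegaW (n : ℕ) (k : ℕ) : Wt n := fun i => if (i : ℕ) + 1 = k then 1 else 0

def alphaW (n : ℕ) (k : ℕ) : Wt n := fun i =>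
  if (i : ℕ) + 1 = k then 2 else if (i : ℕ) + 2 = k ∨ (i : ℕ) = k then -1 else 0

def coeffW (n : ℕ) (l : Wt n) (k : ℕ) : ℤ := ∑ i : Fin n, if (i : ℕ) + 1 = k then l i else 0

def IsDom (n : ℕ) (l : Wt n) : Prop := ∀ i, 0 ≤ l i

def IsDomOne (n : ℕ) (l : Wt n) : Prop := ∀ i, 0 ≤ l i ∧ l i ≤ 1

def InQplus (n : ℕ) (w : Wt n) : Prop :=
  ∃ c : ℕ → ℕ, w = ∑ k ∈ Finset.Icc 1 n, (c k : ℤ) • alphaW n k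

def InQ (n : ℕ) (w : Wt n) : Prop :=
  ∃ c : ℕ → ℤ, w = ∑ k ∈ Finset.Icc 1 n, c k • alphaW n k

noncomputable def formW (n : ℕ) (x y : Wt n) : ℚ :=
  ∑ i : Fin n, ∑ j : Fin n, (x i : ℚ) * (y j : ℚ) *
    ((((min i.val j.val : ℕ) : ℚ) + 1) * ((n : ℚ) + 1 - (((max i.val j.val : ℕ) : ℚ) + 1)) / ((n : ℚ) + 1))

noncomputable def qpow (r : ℚ) : RatFunc ℚ := if r.den = 1 then RatFunc.X ^ r.num else 0

noncomputable def qint (k : ℤ) : RatFunc ℚ := (1 - RatFunc.X ^ k) / (1 - RatFunc.X)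

noncomputable def qbinom (m r : ℤ) : RatFunc ℚ :=
  if 0 ≤ r ∧ r ≤ m then ∏ k ∈ Finset.range r.toNat, qint (m - (k : ℤ)) / qint ((k : ℤ) + 1) else 0

noncomputable def qbinomQ (m r : ℚ) : RatFunc ℚ :=
  if m.den = 1 ∧ r.den = 1 then qbinom m.num r.num else 0

open Classical in
noncomputable def pPoly (n : ℕ) (l m m0 m1 : Wt n) : RatFunc ℚ :=
  if IsDom n l ∧ IsDom n m0 ∧ IsDomOne n m1 ∧ m = 2 • m0 + m1 then
    qpow (formW n (l + m1) (l - m) / 2) *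
      ∏ j ∈ Finset.Icc 1 n,
        qbinomQ (formW n (l - m) (omegaW n j) + formW n m0 (alphaW n j))
          (formW n (l - m) (omegaW n j))
  else 0

/-!
Write `a = (ν - μ, ω_j)` and `b = (μ₀, α_j) = μ₀(h_j)`. Since `(α_j, ω_k) = δ_jk`, the three
polynomials share every binomial factor at `k ≠ j`, and their powers of `q` combine so that the
recursion becomes the `q`-Pascal rule `[a+b, a] = [a+b-1, a] + q^b [a+b-1, a-1]` for the factors
at `j`. For `b = 0` the first term vanishes (`μ₀ - ω_j` is not dominant) exactly as `[a-1, a]`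
does. Pascal fails only at `a = b = 0`; there `(ν - μ, α_j) = ν(h_j) - μ₁(h_j) ≥ 1` forces
`(ν - μ, ω_k) < 0` for a neighbour `k` of `j`, and both sides vanish.
-/

open RatFunc

theorem omegaW_succ_apply (n : ℕ) (i k : Fin n) : omegaW n (i + 1) k = if k = i then 1 else 0 := by
  simp [omegaW, Fin.val_inj]

theorem omegaW_eq_zero {n t : ℕ} (h : t = 0 ∨ n < t) : omegaW n t = 0 := by
  funext k
  simp only [omegaW, Pi.zero_apply]
  exact if_neg (by omega)

theorem alphaW_succ_eq (n : ℕ) (i : ℕ) :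
    alphaW n (i + 1) = omegaW n (i + 1) + omegaW n (i + 1) - omegaW n i - omegaW n (i + 2) := by
  funext k
  simp only [alphaW, omegaW, Pi.add_apply, Pi.sub_apply]
  split_ifs <;> omega

theorem coeffW_succ (n : ℕ) (l : Wt n) (i : Fin n) : coeffW n l (i + 1) = l i := by
  simp [coeffW, Fin.val_inj]

/-- `gram n a b = (ω_{a+1}, ω_{b+1})` in type `A_n`. Extended to all integers it vanishes at
`b = -1` and `b = n`, which absorbs the boundary rows of the Cartan matrix. -/
noncomputable def gram (n : ℕ) (a b : ℤ) : ℚ :=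
  ((min a b + 1 : ℤ) : ℚ) * ((n - max a b : ℤ) : ℚ) / (n + 1)

theorem two_mul_gram_sub_gram_sub_gram (n : ℕ) (a b : ℤ) :
    2 * gram n a b - gram n a (b - 1) - gram n a (b + 1) = if a = b then 1 else 0 := by
  have hn : (n : ℚ) + 1 ≠ 0 := by positivity
  rcases lt_trichotomy a b with h | rfl | h
  · rw [if_neg h.ne, gram, gram, gram, min_eq_left h.le, min_eq_left (by omega),
      min_eq_left (by omega), max_eq_right h.le, max_eq_right (by omega), max_eq_right (by omega)]
    push_cast
    ring
  · rw [if_pos rfl, gram, gram, gram, min_self, max_self, min_eq_right (by omega),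
      max_eq_left (by omega), min_eq_left (by omega), max_eq_right (by omega)]
    field_simp
    push_cast
    ring
  · rw [if_neg h.ne', gram, gram, gram, min_eq_right h.le, min_eq_right (by omega),
      min_eq_right (by omega), max_eq_left h.le, max_eq_left (by omega), max_eq_left (by omega)]
    push_cast
    ring

theorem formW_eq_sum_gram (n : ℕ) (x y : Wt n) :
    formW n x y = ∑ i, (x i : ℚ) * ∑ k, (y k : ℚ) * gram n i k := by
  simp only [formW, gram, mul_sum]
  refine sum_congr rfl fun i _ => sum_congr rfl fun k _ => ?_
  push_cast
  ring

theorem formW_comm (n : ℕ) (x y : Wt n) : formW n x y = formW n y x := by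
  rw [formW, sum_comm]
  refine sum_congr rfl fun i _ => sum_congr rfl fun k _ => ?_
  rw [min_comm, max_comm]
  ring

theorem formW_add_left (n : ℕ) (x y z : Wt n) :
    formW n (x + y) z = formW n x z + formW n y z := by
  simp only [formW, Pi.add_apply, Int.cast_add, add_mul, sum_add_distrib]

theorem formW_sub_left (n : ℕ) (x y z : Wt n) :
    formW n (x - y) z = formW n x z - formW n y z := by
  simp only [formW, Pi.sub_apply, Int.cast_sub, sub_mul, sum_sub_distrib]

theorem formW_add_right (n : ℕ) (x y z : Wt n) :
    formW n x (y + z) = formW n x y + formW n x z := by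
  rw [formW_comm, formW_add_left, formW_comm n y, formW_comm n z]

theorem formW_sub_right (n : ℕ) (x y z : Wt n) :
    formW n x (y - z) = formW n x y - formW n x z := by
  rw [formW_comm, formW_sub_left, formW_comm n y, formW_comm n z]

theorem formW_zero_right (n : ℕ) (x : Wt n) : formW n x 0 = 0 := by simp [formW]

theorem sum_omegaW_mul_gram (n : ℕ) (a : Fin n) {t : ℕ} (ht : t ≤ n + 1) :
    ∑ k : Fin n, (omegaW n t k : ℚ) * gram n a k = gram n a (t - 1) := by
  rcases Nat.eq_zero_or_pos t with rfl | ht0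
  · simp [omegaW, gram]
  rcases ht.lt_or_eq with htn | rfl
  · rw [sum_eq_single ⟨t - 1, by omega⟩ (fun k _ hk => by
      rw [omegaW, if_neg fun h => hk (Fin.ext (by simp only; omega)), Int.cast_zero, zero_mul])
      (by simp)]
    simp [omegaW, Nat.sub_add_cancel ht0, Nat.cast_sub ht0]
  · simp [omegaW, gram, fun k : Fin n => k.isLt.ne]

theorem formW_omegaW (n : ℕ) (x : Wt n) {t : ℕ} (ht : t ≤ n + 1) :
    formW n x (omegaW n t) = ∑ a, (x a : ℚ) * gram n a (t - 1) := by
  simp only [formW_eq_sum_gram, sum_omegaW_mul_gram n _ ht]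

theorem formW_alphaW (n : ℕ) (x : Wt n) (i : Fin n) : formW n x (alphaW n (i + 1)) = x i := by
  have hi := i.isLt
  rw [alphaW_succ_eq, formW_sub_right, formW_sub_right, formW_add_right,
    formW_omegaW n x (t := i + 1) (by omega), formW_omegaW n x (t := i) (by omega),
    formW_omegaW n x (t := i + 2) (by omega)]
  calc _ = ∑ a : Fin n, (x a : ℚ) * (2 * gram n a i - gram n a (i - 1) - gram n a (i + 1)) := by
        simp only [← sum_add_distrib, ← sum_sub_distrib]
        refine sum_congr rfl fun a _ => ?_
        push_cast
        ring_nf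
    _ = x i := by simp [two_mul_gram_sub_gram_sub_gram, Fin.val_inj]

theorem exists_ne_formW_omegaW_neg {n : ℕ} {d : Wt n} {i : Fin n} (hd : 0 < d i)
    (ha : formW n d (omegaW n (i + 1)) = 0) : ∃ k ≠ i, formW n d (omegaW n (k + 1)) < 0 := by
  have hexp := formW_alphaW n d i
  rw [alphaW_succ_eq, formW_sub_right, formW_sub_right, formW_add_right, ha] at hexp
  have hd' : (0 : ℚ) < d i := by exact_mod_cast hd
  rcases lt_or_ge (formW n d (omegaW n i)) 0 with h | h
  · obtain ⟨k, hk⟩ : ∃ k : ℕ, (i : ℕ) = k + 1 := by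
      refine Nat.exists_eq_succ_of_ne_zero fun h0 => ?_
      rw [h0, omegaW_eq_zero (Or.inl rfl), formW_zero_right] at h
      exact h.false
    rw [hk] at h
    exact ⟨⟨k, by omega⟩, fun h' => by simp only [Fin.ext_iff] at h'; omega, h⟩
  · have hin : (i : ℕ) + 2 ≤ n := by
      by_contra hn
      rw [omegaW_eq_zero (t := i + 2) (Or.inr (by omega)), formW_zero_right] at hexp
      linarith
    exact ⟨⟨i + 1, by omega⟩, fun h' => by simp [Fin.ext_iff] at h', by
      simpa using (show formW n d (omegaW n (i + 2)) < 0 by linarith)⟩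

theorem qint_zero : qint 0 = 0 := by simp [qint]

theorem qint_ne_zero {k : ℤ} (hk : 1 ≤ k) : qint k ≠ 0 := by
  lift k to ℕ using (by omega)
  have hpoly : (Polynomial.X ^ k - Polynomial.C 1 : Polynomial ℚ) ≠ 0 :=
    Polynomial.X_pow_sub_C_ne_zero (by omega) 1
  have hX := RatFunc.algebraMap_ne_zero hpoly
  have hX1 := RatFunc.algebraMap_ne_zero (Polynomial.X_sub_C_ne_zero (1 : ℚ))
  simp only [map_sub, map_pow, RatFunc.algebraMap_X, map_one] at hX hX1
  rw [qint, zpow_natCast, ← neg_sub (X ^ k), ← neg_sub X, neg_div_neg_eq]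
  exact div_ne_zero hX hX1

theorem qint_add (r s : ℤ) : qint (r + s) = qint s + X ^ s * qint r := by
  rw [qint, qint, qint, add_comm r, zpow_add₀ X_ne_zero]
  ring

noncomputable def qFactorial (r : ℕ) : RatFunc ℚ := ∏ k ∈ range r, qint (k + 1)

noncomputable def qDescFactorial (m : ℤ) (r : ℕ) : RatFunc ℚ := ∏ k ∈ range r, qint (m - k)

theorem qFactorial_ne_zero (r : ℕ) : qFactorial r ≠ 0 :=
  prod_ne_zero_iff.mpr fun _ _ => qint_ne_zero (by omega)

theorem qFactorial_succ (r : ℕ) : qFactorial (r + 1) = qFactorial r * qint (r + 1) :=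
  prod_range_succ _ r

theorem qDescFactorial_succ (m : ℤ) (r : ℕ) :
    qDescFactorial m (r + 1) = qDescFactorial m r * qint (m - r) :=
  prod_range_succ _ r

theorem qDescFactorial_succ' (m : ℤ) (r : ℕ) :
    qDescFactorial m (r + 1) = qint m * qDescFactorial (m - 1) r := by
  simp only [qDescFactorial, prod_range_succ', Nat.cast_zero, sub_zero, Nat.cast_succ, mul_comm,
    sub_add_eq_sub_sub_swap]

theorem qbinom_eq_zero {m r : ℤ} (h : r < 0 ∨ m < r) : qbinom m r = 0 :=
  if_neg (by omega)

theorem qbinom_natCast (m : ℤ) (r : ℕ) (h : (r : ℤ) ≤ m) :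
    qbinom m r = qDescFactorial m r / qFactorial r := by
  rw [qbinom, if_pos ⟨by positivity, h⟩, Int.toNat_natCast, prod_div_distrib]
  rfl

theorem qbinom_mul_qint_sub {m r : ℤ} (h0 : 0 ≤ r) (h : r ≤ m) :
    qbinom m r * qint (m - r) = qbinom (m - 1) r * qint m := by
  rcases h.lt_or_eq with h | rfl
  · lift r to ℕ using h0
    rw [qbinom_natCast m r h.le, qbinom_natCast (m - 1) r (by omega), div_mul_eq_mul_div,
      ← qDescFactorial_succ, qDescFactorial_succ']
    ring
  · rw [sub_self, qint_zero, qbinom_eq_zero (m := r - 1) (r := r) (by omega)]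
    ring

theorem qbinom_mul_qint {m r : ℤ} (h0 : 0 ≤ r) (h : r ≤ m) :
    qbinom m r * qint r = qbinom (m - 1) (r - 1) * qint m := by
  rcases h0.lt_or_eq with h0 | rfl
  · lift r to ℕ using h0.le
    obtain ⟨s, rfl⟩ : ∃ s, r = s + 1 := ⟨r - 1, by omega⟩
    rw [qbinom_natCast m _ h, show ((s + 1 : ℕ) : ℤ) - 1 = s by push_cast; ring,
      qbinom_natCast (m - 1) s (by omega), qDescFactorial_succ', qFactorial_succ]
    push_cast
    field_simp [qFactorial_ne_zero, qint_ne_zero (show (1 : ℤ) ≤ s + 1 by omega)]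
  · rw [qint_zero, qbinom_eq_zero (m := m - 1) (r := 0 - 1) (by omega)]
    ring

theorem qbinom_pascal {m r : ℤ} (h : m ≠ 0 ∨ r ≠ 0) :
    qbinom m r = qbinom (m - 1) r + X ^ (m - r) * qbinom (m - 1) (r - 1) := by
  by_cases hr : r < 0 ∨ m < r
  · rw [qbinom_eq_zero hr, qbinom_eq_zero (by omega), qbinom_eq_zero (by omega)]
    ring
  have hm : 1 ≤ m := by omega
  apply mul_right_cancel₀ (qint_ne_zero hm)
  calc qbinom m r * qint m
      = qbinom m r * qint (m - r) + X ^ (m - r) * (qbinom m r * qint r) := by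
        have hsplit := qint_add r (m - r)
        rw [add_sub_cancel] at hsplit
        rw [hsplit]
        ring
    _ = _ := by
        rw [qbinom_mul_qint_sub (by omega) (by omega), qbinom_mul_qint (by omega) (by omega)]
        ring

theorem qpow_intCast (z : ℤ) : qpow z = X ^ z := by simp [qpow]

theorem qpow_add_intCast (r : ℚ) (z : ℤ) : qpow (r + z) = X ^ z * qpow r := by
  by_cases hr : r.den = 1
  · rw [← Rat.coe_int_num_of_den_eq_one hr, ← Int.cast_add, qpow_intCast, qpow_intCast,
      ← zpow_add₀ X_ne_zero, add_comm]
  · simp [qpow, hr]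

theorem qbinomQ_intCast (x y : ℤ) : qbinomQ x y = qbinom x y := by simp [qbinomQ]

theorem qbinomQ_of_den_ne_one (m : ℚ) {r : ℚ} (h : r.den ≠ 1) : qbinomQ m r = 0 := by
  simp [qbinomQ, h]

theorem qbinomQ_eq_zero {m r : ℚ} (h : r < 0 ∨ m < r) : qbinomQ m r = 0 := by
  unfold qbinomQ
  split_ifs with hd
  · rw [← Rat.coe_int_num_of_den_eq_one hd.1, ← Rat.coe_int_num_of_den_eq_one hd.2] at h
    exact qbinom_eq_zero (by exact_mod_cast h)
  · rfl

theorem qpow_mul_qbinomQ_pascal (E a : ℚ) (b v : ℤ) (h : a ≠ 0 ∨ b ≠ 0) :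
    qpow E * qbinomQ (a + b) a =
      qpow a * (qpow (E - a) * qbinomQ (a + (b - 1 : ℤ)) a) +
      qpow (v - 1) * (qpow (E + (b - v + 1 : ℤ)) * qbinomQ (a - 1 + b) (a - 1)) := by
  by_cases ha : a.den = 1
  · obtain ⟨z, rfl⟩ : ∃ z : ℤ, a = z := ⟨a.num, (Rat.coe_int_num_of_den_eq_one ha).symm⟩
    have hpascal := qbinom_pascal (m := z + b) (r := z) (by norm_cast at h; omega)
    rw [add_sub_cancel_left] at hpascal
    have hcancel : (X : RatFunc ℚ) ^ z * X ^ (-z) = 1 := by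
      rw [← zpow_add₀ X_ne_zero, add_neg_cancel, zpow_zero]
    have hshift : (X : RatFunc ℚ) ^ (v - 1) * X ^ (b - v + 1) = X ^ b := by
      rw [← zpow_add₀ X_ne_zero]
      ring_nf
    have hE : qpow (E - z) = X ^ (-z) * qpow E := by
      rw [← qpow_add_intCast]; push_cast; ring_nf
    have hv : qpow (v - 1) = X ^ (v - 1) := by rw [← qpow_intCast]; push_cast; rfl
    have h0 : qbinomQ (z + b) z = qbinom (z + b) z := by rw [← qbinomQ_intCast]; push_cast; rfl
    have h1 : qbinomQ (z + (b - 1 : ℤ)) z = qbinom (z + b - 1) z := by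
      rw [← qbinomQ_intCast]; push_cast; ring_nf
    have h2 : qbinomQ (z - 1 + b) (z - 1) = qbinom (z + b - 1) (z - 1) := by
      rw [← qbinomQ_intCast]; push_cast; ring_nf
    rw [qpow_intCast, qpow_add_intCast, hE, hv, h0, h1, h2, hpascal]
    linear_combination (-(qpow E * qbinom (z + b - 1) z)) * hcancel -
      qpow E * qbinom (z + b - 1) (z - 1) * hshift
  · have ha' : (a - 1).den ≠ 1 := by simpa using ha
    simp only [qbinomQ_of_den_ne_one _ ha, qbinomQ_of_den_ne_one _ ha']
    ring

theorem prod_Icc_one_eq_prod_fin {M : Type*} [CommMonoid M] (n : ℕ) (f : ℕ → M) :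
    ∏ k ∈ Icc 1 n, f k = ∏ i : Fin n, f (i + 1) := by
  rw [Fin.prod_univ_eq_prod_range (fun i => f (i + 1)), range_eq_Ico, prod_Ico_add' f 0 n 1]
  rfl

theorem prod_eq_mul_prod_erase_of_ne {ι M : Type*} [Fintype ι] [DecidableEq ι] [CommMonoid M]
    {f g : ι → M} (i : ι) (h : ∀ k ≠ i, g k = f k) :
    ∏ k, g k = g i * ∏ k ∈ univ.erase i, f k := by
  rw [← mul_prod_erase univ g (mem_univ i)]
  exact congrArg _ (prod_congr rfl fun k hk => h k (ne_of_mem_erase hk))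

theorem IsDom.sub_nsmul_omegaW {n : ℕ} {l : Wt n} (hl : IsDom n l) {i : Fin n} {c : ℕ}
    (hi : c ≤ l i) : IsDom n (l - c • omegaW n (i + 1)) := by
  intro k
  by_cases hk : k = i
  · subst hk
    simpa [omegaW_succ_apply] using hi
  · simpa [omegaW_succ_apply, hk] using hl k

theorem IsDom.sub_alphaW {n : ℕ} {l : Wt n} (hl : IsDom n l) {i : Fin n} (hi : 2 ≤ l i) :
    IsDom n (l - alphaW n (i + 1)) := by
  intro k
  have := hl k
  simp only [Pi.sub_apply, alphaW]
  split_ifs with hki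
  · obtain rfl : k = i := Fin.ext (by omega)
    omega
  all_goals omega

/-- The factor of `pPoly` at `α_{i+1}`, written through `d = l - m`, with `(m0, α_{i+1}) = m0 i`
already evaluated. -/
noncomputable def binomFactor (n : ℕ) (d m0 : Wt n) (i : Fin n) : RatFunc ℚ :=
  qbinomQ (formW n d (omegaW n (i + 1)) + m0 i) (formW n d (omegaW n (i + 1)))

theorem pPoly_eq_prod {n : ℕ} {l m m0 m1 : Wt n} (hl : IsDom n l) (hm0 : IsDom n m0)
    (hm1 : IsDomOne n m1) (hdec : m = 2 • m0 + m1) :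
    pPoly n l m m0 m1 = qpow (formW n (l + m1) (l - m) / 2) * ∏ i, binomFactor n (l - m) m0 i := by
  rw [pPoly, if_pos ⟨hl, hm0, hm1, hdec⟩, prod_Icc_one_eq_prod_fin]
  simp only [binomFactor, formW_alphaW]

theorem prod_erase_binomFactor_eq_zero {n : ℕ} {d : Wt n} (m0 : Wt n) {i : Fin n} (hd : 0 < d i)
    (ha : formW n d (omegaW n (i + 1)) = 0) : ∏ k ∈ univ.erase i, binomFactor n d m0 k = 0 := by
  obtain ⟨k, hki, hk⟩ := exists_ne_formW_omegaW_neg hd ha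
  exact prod_eq_zero (mem_erase.mpr ⟨hki, mem_univ k⟩) (qbinomQ_eq_zero (Or.inl hk))

theorem pPoly_eq_mul_prod_erase {n : ℕ} {l m m0 m1 : Wt n} (hl : IsDom n l) (hm0 : IsDom n m0)
    (hm1 : IsDomOne n m1) (hdec : m = 2 • m0 + m1) (i : Fin n) :
    pPoly n l m m0 m1 = qpow (formW n (l + m1) (l - m) / 2) *
      (qbinomQ (formW n (l - m) (omegaW n (i + 1)) + m0 i) (formW n (l - m) (omegaW n (i + 1))) *
        ∏ k ∈ univ.erase i, binomFactor n (l - m) m0 k) := by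
  rw [pPoly_eq_prod hl hm0 hm1 hdec, ← mul_prod_erase _ _ (mem_univ i)]
  rfl

theorem pPoly_sub_two_smul_omegaW {n : ℕ} {l m m0 m1 : Wt n} (hl : IsDom n l) (hm0 : IsDom n m0)
    (hm1 : IsDomOne n m1) (hdec : m = 2 • m0 + m1) {i : Fin n} (hi : 2 ≤ l i) :
    pPoly n (l - 2 • omegaW n (i + 1)) (m - 2 • omegaW n (i + 1)) (m0 - omegaW n (i + 1)) m1 =
      qpow (formW n (l + m1) (l - m) / 2 - formW n (l - m) (omegaW n (i + 1))) *
        (qbinomQ (formW n (l - m) (omegaW n (i + 1)) + (m0 i - 1 : ℤ))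
            (formW n (l - m) (omegaW n (i + 1))) *
          ∏ k ∈ univ.erase i, binomFactor n (l - m) m0 k) := by
  rcases (hm0 i).lt_or_eq with hb | hb
  · have hm0' : IsDom n (m0 - omegaW n (i + 1)) := by
      simpa using hm0.sub_nsmul_omegaW (c := 1) (by push_cast; omega)
    rw [pPoly_eq_prod (hl.sub_nsmul_omegaW (by simpa using hi)) hm0' hm1
      (by rw [hdec, smul_sub]; abel), sub_sub_sub_cancel_right,
      prod_eq_mul_prod_erase_of_ne (f := binomFactor n (l - m) m0) i fun k hk => by
        simp [binomFactor, omegaW_succ_apply, hk]]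
    congr 2
    · rw [sub_add_eq_add_sub, formW_sub_left n (l + m1), two_smul, formW_add_left n (omegaW n _),
        formW_comm n (omegaW n _)]
      ring
    · simp [binomFactor, omegaW_succ_apply]
  · have hnot : ¬IsDom n (m0 - omegaW n (i + 1)) := fun h => by
      simpa [omegaW_succ_apply, ← hb] using h i
    rw [pPoly, if_neg (fun h => hnot h.2.1), qbinomQ_eq_zero (Or.inr (by rw [← hb]; simp)),
      zero_mul, mul_zero]

theorem pPoly_sub_alphaW {n : ℕ} {l m m0 m1 : Wt n} (hl : IsDom n l) (hm0 : IsDom n m0)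
    (hm1 : IsDomOne n m1) (hdec : m = 2 • m0 + m1) {i : Fin n} (hi : 2 ≤ l i) :
    pPoly n (l - alphaW n (i + 1)) m m0 m1 =
      qpow (formW n (l + m1) (l - m) / 2 + (m0 i - l i + 1 : ℤ)) *
        (qbinomQ (formW n (l - m) (omegaW n (i + 1)) - 1 + m0 i)
            (formW n (l - m) (omegaW n (i + 1)) - 1) *
          ∏ k ∈ univ.erase i, binomFactor n (l - m) m0 k) := by
  have hform : ∀ k : Fin n, formW n (l - alphaW n (i + 1) - m) (omegaW n (k + 1)) =
      formW n (l - m) (omegaW n (k + 1)) - if k = i then 1 else 0 := fun k => by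
    rw [sub_right_comm, formW_sub_left, formW_comm n (alphaW n _), formW_alphaW,
      omegaW_succ_apply]
    rcases eq_or_ne k i with rfl | hki <;> simp [*, Ne.symm]
  rw [pPoly_eq_prod (hl.sub_alphaW hi) hm0 hm1 hdec,
    prod_eq_mul_prod_erase_of_ne (f := binomFactor n (l - m) m0) i fun k hk => by
      simp only [binomFactor, hform, if_neg hk, sub_zero]]
  congr 2
  · rw [sub_add_eq_add_sub, sub_right_comm l, formW_sub_left n (l + m1),
      formW_sub_right n (l + m1) (l - m), formW_sub_right n (alphaW n _) (l - m),
      formW_comm n (alphaW n _) (l - m), formW_alphaW, formW_alphaW, formW_alphaW]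
    have hα : alphaW n (i + 1) i = 2 := by simp [alphaW]
    have hmi : m i = 2 * m0 i + m1 i := by simp [hdec]
    simp only [hα, Pi.add_apply, Pi.sub_apply, hmi]
    push_cast
    ring
  · simp [binomFactor, hform]

/-- recursion for p_ν^μ when ν(h_j) ≥ 2. -/
theorem pPoly_recursion (n : ℕ) (nu m m0 m1 : Wt n) (j : ℕ)
    (hnu : IsDom n nu) (hm0 : IsDom n m0) (hm1 : IsDomOne n m1)
    (hdec : m = 2 • m0 + m1) (hj1 : 1 ≤ j) (hjn : j ≤ n)
    (hge : 2 ≤ coeffW n nu j) :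
    pPoly n nu m m0 m1 =
      qpow (formW n (omegaW n j) (nu - m)) *
        pPoly n (nu - 2 • omegaW n j) (m - 2 • omegaW n j) (m0 - omegaW n j) m1 +
      qpow (formW n nu (alphaW n j) - 1) * pPoly n (nu - alphaW n j) m m0 m1 := by
  obtain ⟨i, rfl⟩ : ∃ i : Fin n, (i : ℕ) + 1 = j := ⟨⟨j - 1, by omega⟩, by simp; omega⟩
  rw [coeffW_succ] at hge
  rw [pPoly_eq_mul_prod_erase hnu hm0 hm1 hdec i, pPoly_sub_two_smul_omegaW hnu hm0 hm1 hdec hge,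
    pPoly_sub_alphaW hnu hm0 hm1 hdec hge, formW_comm n (omegaW n _), formW_alphaW]
  by_cases hdeg : formW n (nu - m) (omegaW n (i + 1)) = 0 ∧ m0 i = 0
  · have hd : 0 < (nu - m) i := by
      have := hm1 i
      simp only [hdec, Pi.sub_apply, Pi.add_apply, Pi.smul_apply, hdeg.2, smul_zero, zero_add]
      omega
    simp [prod_erase_binomFactor_eq_zero m0 hd hdeg.1]
  · linear_combination (∏ k ∈ univ.erase i, binomFactor n (nu - m) m0 k) *
      qpow_mul_qbinomQ_pascal _ _ (m0 i) (nu i) (not_and_or.mp hdeg)
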